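/- arXiv:2407.04950 — 3 statements merged into one kernel-verified Lean document; each statement's English description precedes it below -/
import Mathlib

section
/- (Erdős–Füredi–Gould–Gunderson) For every n ≥ 5, the maximum number of edges in an n-vertex graph containing no bowtie equals ⌊n²/4⌋ + 1; that is, ex(n, F₂) = ⌊n²/4⌋ + 1. -/
open Classical in
/-- Adjacency matrix of a simple graph, over `ℝ`. -/
noncomputable def adjMat {V : Type*} [Fintype V] (G : SimpleGraph V) : Matrix V V ℝ :=
  Matrix.of fun i j => if G.Adj i j then 1 else 0

/-- Spectral radius (largest eigenvalue) of a finite simple graph: the supremum of the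
real spectrum of its adjacency matrix. -/
noncomputable def specRad {V : Type*} [Fintype V] [DecidableEq V]
    (G : SimpleGraph V) : ℝ :=
  sSup (spectrum ℝ (adjMat G))

/-- Number of edges of a graph. -/
noncomputable def edgeCount {V : Type*} (G : SimpleGraph V) : ℕ := G.edgeSet.ncard

/-- Number of triangles of a graph. -/
noncomputable def triangleCount {V : Type*} (G : SimpleGraph V) : ℕ :=
  {t : Finset V | G.IsNClique 3 t}.ncard

/-- Triangle covering number: minimum size of a vertex set meeting every triangle. -/
noncomputable def triangleCoverNumber {V : Type*} [Fintype V] [DecidableEq V]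
    (G : SimpleGraph V) : ℕ :=
  sInf {k | ∃ s : Finset V, s.card = k ∧ ∀ t : Finset V, G.IsNClique 3 t → ∃ v ∈ s, v ∈ t}

/-- Number of bowties: unordered pairs of triangles sharing exactly one vertex. -/
noncomputable def bowtieCount {V : Type*} [DecidableEq V] (G : SimpleGraph V) : ℕ :=
  {p : Finset (Finset V) | p.card = 2 ∧ (∀ t ∈ p, G.IsNClique 3 t) ∧
    ∀ t₁ ∈ p, ∀ t₂ ∈ p, t₁ ≠ t₂ → (t₁ ∩ t₂).card = 1}.ncard

/-- Complete bipartite graph on `Fin n` with parts `[0, s)` and `[s, n)`. -/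
def biGraph (n s : ℕ) : SimpleGraph (Fin n) :=
  SimpleGraph.fromRel (fun i j => (i : ℕ) < s ∧ s ≤ (j : ℕ))

/-- `K_{s,t}^{+2}`: complete bipartite with two disjoint extra edges `{0,1}`, `{2,3}`
inside the part `[0, s)`. -/
def biGraphPlus2 (n s : ℕ) : SimpleGraph (Fin n) :=
  SimpleGraph.fromRel (fun i j => ((i : ℕ) < s ∧ s ≤ (j : ℕ)) ∨
    ((i : ℕ) = 0 ∧ (j : ℕ) = 1) ∨ ((i : ℕ) = 2 ∧ (j : ℕ) = 3))

/-- `K_{s,t}^{+}`: complete bipartite with one extra edge `{0,1}` inside the part `[0, s)`. -/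
def biGraphPlus1 (n s : ℕ) : SimpleGraph (Fin n) :=
  SimpleGraph.fromRel (fun i j => ((i : ℕ) < s ∧ s ≤ (j : ℕ)) ∨ ((i : ℕ) = 0 ∧ (j : ℕ) = 1))

/-- `K_{s,t}^{++}`: complete bipartite with one extra edge in each part. -/
def biGraphPlusPlus (n s : ℕ) : SimpleGraph (Fin n) :=
  SimpleGraph.fromRel (fun i j => ((i : ℕ) < s ∧ s ≤ (j : ℕ)) ∨
    ((i : ℕ) = 0 ∧ (j : ℕ) = 1) ∨ ((i : ℕ) = s ∧ (j : ℕ) = s + 1))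

/-- The friendship graph `F_k`: `k` triangles meeting in the common vertex `0`. -/
def friendship (k : ℕ) : SimpleGraph (Fin (2 * k + 1)) :=
  SimpleGraph.fromRel (fun a b => ((a : ℕ) = 0 ∧ (b : ℕ) ≠ 0) ∨
    ((a : ℕ) % 2 = 1 ∧ (b : ℕ) = (a : ℕ) + 1))

/-- `G` contains a copy of `H` (a subgraph isomorphic to `H`). -/
def ContainsCopy {α β : Type*} (H : SimpleGraph α) (G : SimpleGraph β) : Prop :=
  ∃ f : α → β, Function.Injective f ∧ ∀ a b, H.Adj a b → G.Adj (f a) (f b)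

/-- Number of edges of `G` with both endpoints in `S`. -/
noncomputable def eIn {V : Type*} (G : SimpleGraph V) (S : Finset V) : ℕ :=
  {e ∈ G.edgeSet | ∀ v ∈ e, v ∈ S}.ncard

/-- Number of edges of `G` with one endpoint in `S` and the other in `T`. -/
noncomputable def eCross {V : Type*} (G : SimpleGraph V) (S T : Finset V) : ℕ :=
  {e ∈ G.edgeSet | ∃ u ∈ S, ∃ v ∈ T, e = s(u, v)}.ncard

/-- `G` is `ε`-far from being bipartite: every spanning subgraph obtained by removing
fewer than `ε` edges is non-bipartite. -/
def FarFromBipartite {V : Type*} (G : SimpleGraph V) (ε : ℝ) : Prop :=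
  ∀ G' : SimpleGraph V, G' ≤ G → (edgeCount G : ℝ) - ε < (edgeCount G' : ℝ) →
    ¬ G'.Colorable 2

section EFGGaux
open Finset SimpleGraph

variable {V : Type*}

lemma efgg_copy_map {W : Type*} {H : SimpleGraph (Fin 5)} {G : SimpleGraph V}
    {G' : SimpleGraph W} (g : W → V) (hg : Function.Injective g)
    (hadj : ∀ a b, G'.Adj a b → G.Adj (g a) (g b)) (h : ContainsCopy H G') :
    ContainsCopy H G := by
  obtain ⟨f, hf, ha⟩ := h
  exact ⟨g ∘ f, hg.comp hf, fun a b hab => hadj _ _ (ha a b hab)⟩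

lemma efgg_bowtie {G : SimpleGraph V} {c a b d e : V}
    (hab : G.Adj a b) (hca : G.Adj c a) (hcb : G.Adj c b)
    (hde : G.Adj d e) (hcd : G.Adj c d) (hce : G.Adj c e)
    (had : a ≠ d) (hae : a ≠ e) (hbd : b ≠ d) (hbe : b ≠ e) :
    ContainsCopy (friendship 2) G := by
  have h1 : a ≠ b := hab.ne
  have h2 : c ≠ a := hca.ne
  have h3 : c ≠ b := hcb.ne
  have h4 : d ≠ e := hde.ne
  have h5 : c ≠ d := hcd.ne
  have h6 : c ≠ e := hce.ne
  refine ⟨![c, a, b, d, e], ?_, ?_⟩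
  · intro i j hij
    fin_cases i <;> fin_cases j <;> first
      | rfl
      | exact absurd hij h1 | exact absurd hij h1.symm
      | exact absurd hij h2 | exact absurd hij h2.symm
      | exact absurd hij h3 | exact absurd hij h3.symm
      | exact absurd hij h4 | exact absurd hij h4.symm
      | exact absurd hij h5 | exact absurd hij h5.symm
      | exact absurd hij h6 | exact absurd hij h6.symm
      | exact absurd hij had | exact absurd hij had.symm
      | exact absurd hij hae | exact absurd hij hae.symm
      | exact absurd hij hbd | exact absurd hij hbd.symm
      | exact absurd hij hbe | exact absurd hij hbe.symm
  · intro i j hij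
    fin_cases i <;> fin_cases j <;> first
      | exact absurd hij (by rw [friendship, SimpleGraph.fromRel_adj]; decide)
      | exact hab | exact hab.symm | exact hca | exact hca.symm
      | exact hcb | exact hcb.symm | exact hcd | exact hcd.symm
      | exact hce | exact hce.symm | exact hde | exact hde.symm

lemma efgg_count [Fintype V] (G : SimpleGraph V) [Fintype G.edgeSet] :
    edgeCount G = #G.edgeFinset := by
  rw [edgeCount, SimpleGraph.edgeFinset, Set.ncard_eq_toFinset_card']

variable [Fintype V] [DecidableEq V]

lemma efgg_inter_card {G : SimpleGraph V} [DecidableRel G.Adj] (u : V) (T : Finset V) :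
    #(G.neighborFinset u ∩ T) = ∑ w ∈ T, if G.Adj u w then 1 else 0 := by
  rw [← Finset.card_filter]
  congr 1
  ext w
  simp [mem_neighborFinset, and_comm]

lemma efgg_split {G : SimpleGraph V} [DecidableRel G.Adj] (u : V) (S : Finset V) :
    G.degree u = #(G.neighborFinset u ∩ S) + #(G.neighborFinset u ∩ Sᶜ) := by
  have h1 : G.neighborFinset u ∩ S = (G.neighborFinset u).filter (· ∈ S) := by
    ext w; simp [Finset.mem_filter]
  have h2 : G.neighborFinset u ∩ Sᶜ = (G.neighborFinset u).filter (fun w => ¬ w ∈ S) := by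
    ext w; simp [Finset.mem_filter]
  rw [h1, h2, Finset.card_filter_add_card_filter_not]
  rfl

lemma efgg_sum_deg {G : SimpleGraph V} [DecidableRel G.Adj] (S : Finset V) :
    ∑ u ∈ S, G.degree u
      = (∑ u ∈ S, #(G.neighborFinset u ∩ S)) + ∑ w ∈ Sᶜ, #(G.neighborFinset w ∩ S) := by
  have h1 : ∑ u ∈ S, G.degree u
      = (∑ u ∈ S, #(G.neighborFinset u ∩ S)) + ∑ u ∈ S, #(G.neighborFinset u ∩ Sᶜ) := by
    rw [← Finset.sum_add_distrib]
    exact Finset.sum_congr rfl fun u _ => efgg_split u S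
  rw [h1]
  congr 1
  have h2 : ∑ u ∈ S, #(G.neighborFinset u ∩ Sᶜ)
      = ∑ u ∈ S, ∑ w ∈ Sᶜ, if G.Adj u w then 1 else 0 :=
    Finset.sum_congr rfl fun u _ => efgg_inter_card u Sᶜ
  have h3 : ∑ w ∈ Sᶜ, #(G.neighborFinset w ∩ S)
      = ∑ w ∈ Sᶜ, ∑ u ∈ S, if G.Adj w u then 1 else 0 :=
    Finset.sum_congr rfl fun w _ => efgg_inter_card w S
  rw [h2, h3, Finset.sum_comm]
  exact Finset.sum_congr rfl fun w _ => Finset.sum_congr rfl fun u _ => by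
    simp only [G.adj_comm]

lemma efgg_exists_two {G : SimpleGraph V} [DecidableRel G.Adj] (S : Finset V)
    (hbig : (Fintype.card V - #S) + #S * (#S - 1) < ∑ u ∈ S, G.degree u) :
    ∃ w, w ∉ S ∧ ∃ a ∈ S, ∃ b ∈ S, a ≠ b ∧ G.Adj w a ∧ G.Adj w b := by
  by_contra hcon
  push_neg at hcon
  have hone : ∀ w ∈ Sᶜ, #(G.neighborFinset w ∩ S) ≤ 1 := by
    intro w hw
    by_contra hlt
    push_neg at hlt
    obtain ⟨a, ha, b, hb, hab⟩ := Finset.one_lt_card.mp hlt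
    rw [Finset.mem_inter, mem_neighborFinset] at ha hb
    exact hcon w (Finset.mem_compl.mp hw) a ha.2 b hb.2 hab ha.1 hb.1
  have b1 : ∑ u ∈ S, #(G.neighborFinset u ∩ S) ≤ #S * (#S - 1) := by
    have hterm : ∀ u ∈ S, #(G.neighborFinset u ∩ S) ≤ #S - 1 := by
      intro u hu
      have hsub : G.neighborFinset u ∩ S ⊆ S.erase u := by
        intro w hw
        rw [Finset.mem_erase]
        rw [Finset.mem_inter, mem_neighborFinset] at hw
        exact ⟨hw.1.ne', hw.2⟩
      calc #(G.neighborFinset u ∩ S) ≤ #(S.erase u) := Finset.card_le_card hsub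
        _ = #S - 1 := Finset.card_erase_of_mem hu
    calc ∑ u ∈ S, #(G.neighborFinset u ∩ S) ≤ #S • (#S - 1) :=
          Finset.sum_le_card_nsmul _ _ _ hterm
      _ = #S * (#S - 1) := by rw [smul_eq_mul]
  have b2 : ∑ w ∈ Sᶜ, #(G.neighborFinset w ∩ S) ≤ Fintype.card V - #S := by
    calc ∑ w ∈ Sᶜ, #(G.neighborFinset w ∩ S) ≤ #(Sᶜ) • 1 :=
          Finset.sum_le_card_nsmul _ _ _ hone
      _ = Fintype.card V - #S := by rw [smul_eq_mul, mul_one, Finset.card_compl]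
  have := efgg_sum_deg (G := G) S
  omega

lemma efgg_codeg {G : SimpleGraph V} [DecidableRel G.Adj] (x y : V) :
    G.degree x + G.degree y
      ≤ Fintype.card V + #(G.neighborFinset x ∩ G.neighborFinset y) := by
  have h := Finset.card_union_add_card_inter (G.neighborFinset x) (G.neighborFinset y)
  have h2 : #(G.neighborFinset x ∪ G.neighborFinset y) ≤ Fintype.card V :=
    Finset.card_le_univ _
  have hx : G.degree x = #(G.neighborFinset x) := rfl
  have hy : G.degree y = #(G.neighborFinset y) := rfl
  omega

lemma efgg_edge_split (G : SimpleGraph V) [DecidableRel G.Adj] (v : V) :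
    #G.edgeFinset
      = #(SimpleGraph.comap (Subtype.val : {w : V // w ≠ v} → V) G).edgeFinset
        + G.degree v := by
  have hinj : Function.Injective (Sym2.map (Subtype.val : {w : V // w ≠ v} → V)) :=
    Sym2.map.injective Subtype.val_injective
  have hmem : ∀ e' : Sym2 {w : V // w ≠ v},
      e' ∈ (SimpleGraph.comap (Subtype.val : {w : V // w ≠ v} → V) G).edgeSet →
      Sym2.map (Subtype.val : {w : V // w ≠ v} → V) e' ∈ G.edgeSet := by
    intro e'
    induction e' with
    | _ x y =>
      intro h
      rw [Sym2.map_pair_eq, mem_edgeSet]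
      exact (mem_edgeSet _).mp h
  have hunion : G.edgeFinset
      = (SimpleGraph.comap (Subtype.val : {w : V // w ≠ v} → V) G).edgeFinset.image
          (Sym2.map Subtype.val) ∪ G.incidenceFinset v := by
    ext e
    induction e with
    | _ a b =>
      simp only [mem_edgeFinset, Finset.mem_union, Finset.mem_image,
        mem_incidenceFinset, mem_edgeSet]
      constructor
      · intro hab
        by_cases hva : a = v
        · exact Or.inr ((G.mk'_mem_incidenceSet_iff).mpr ⟨hab, Or.inl hva.symm⟩)
        · by_cases hvb : b = v
          · exact Or.inr ((G.mk'_mem_incidenceSet_iff).mpr ⟨hab, Or.inr hvb.symm⟩)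
          · refine Or.inl ⟨s(⟨a, hva⟩, ⟨b, hvb⟩), ?_, ?_⟩
            · exact ((SimpleGraph.comap (Subtype.val : {w : V // w ≠ v} → V)
                G).mem_edgeSet).mpr hab
            · rfl
      · rintro (⟨e', he', heq⟩ | hinc)
        · exact (G.mem_edgeSet).mp (heq ▸ hmem e' he')
        · exact hinc.1
  have hdisj : Disjoint
      ((SimpleGraph.comap (Subtype.val : {w : V // w ≠ v} → V) G).edgeFinset.image
        (Sym2.map Subtype.val))
      (G.incidenceFinset v) := by
    rw [Finset.disjoint_left]
    rintro e he hinc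
    obtain ⟨e', he', rfl⟩ := Finset.mem_image.mp he
    induction e' with
    | _ x y =>
      rw [mem_incidenceFinset] at hinc
      have hv : v ∈ (Sym2.map (Subtype.val : {w : V // w ≠ v} → V) s(x, y)) := hinc.2
      simp only [Sym2.map_pair_eq, Sym2.mem_iff] at hv
      rcases hv with hv | hv
      · exact x.2 hv.symm
      · exact y.2 hv.symm
  rw [hunion, Finset.card_union_of_disjoint hdisj,
    Finset.card_image_of_injective _ hinj, card_incidenceFinset_eq_degree]

end EFGGaux
section EFGGcore
open Finset SimpleGraph

variable {V : Type*} [Fintype V] [DecidableEq V]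

lemma efgg_star {G : SimpleGraph V} [DecidableRel G.Adj]
    (hNB : ¬ ContainsCopy (friendship 2) G) (x y z v : V)
    (hxy : G.Adj x y) (hxz : G.Adj x z) (hyz : G.Adj y z)
    (hvx : G.Adj v x) (hvy : G.Adj v y) (hnadj : ¬ G.Adj v z) (hvz : v ≠ z) :
    ∀ a b, G.Adj x a → G.Adj x b → G.Adj a b → y = a ∨ y = b := by
  intro a b hxa hxb hab
  by_contra hcon
  push_neg at hcon
  obtain ⟨hya, hyb⟩ := hcon
  by_cases hza : z = a
  · subst hza
    have hbv : b ≠ v := fun h => hnadj ((h ▸ hab).symm)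
    exact hNB (efgg_bowtie (c := x) (a := z) (b := b) (d := y) (e := v)
      hab hxa hxb hvy.symm hxy hvx.symm hyz.ne' (Ne.symm hvz) hyb.symm hbv)
  · by_cases hzb : z = b
    · subst hzb
      have hav : a ≠ v := fun h => hnadj (h ▸ hab)
      exact hNB (efgg_bowtie (c := x) (a := a) (b := z) (d := y) (e := v)
        hab hxa hxb hvy.symm hxy hvx.symm hya.symm hav hyz.ne' (Ne.symm hvz))
    · exact hNB (efgg_bowtie (c := x) (a := a) (b := b) (d := y) (e := z)
        hab hxa hxb hyz hxy hxz hya.symm (fun h => hza h.symm) hyb.symm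
        (fun h => hzb h.symm))

lemma efgg_core (n : ℕ) (hn : 5 ≤ n) {G : SimpleGraph V} [DecidableRel G.Adj]
    (hcard : Fintype.card V = n)
    (hNB : ¬ ContainsCopy (friendship 2) G)
    (hdeg : ∀ u, n / 2 + 1 ≤ G.degree u)
    (hcommon : ∀ p q : V, ∃ c, G.Adj p c ∧ G.Adj q c)
    (x y z v : V)
    (hxy : G.Adj x y) (hxz : G.Adj x z) (hyz : G.Adj y z)
    (hvx : G.Adj v x) (hvy : G.Adj v y) (hvz : v ≠ z) : False := by
  by_cases hadj : G.Adj v z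
  · -- K4 case
    set S : Finset V := {x, y, z, v} with hS
    have hxS : x ∈ S := by simp [hS]
    have hyS : y ∈ S := by simp [hS]
    have hzS : z ∈ S := by simp [hS]
    have hvS : v ∈ S := by simp [hS]
    have hcomplete : ∀ p ∈ S, ∀ q ∈ S, p ≠ q → G.Adj p q := by
      intro p hp q hq hpq
      simp only [hS, Finset.mem_insert, Finset.mem_singleton] at hp hq
      rcases hp with rfl | rfl | rfl | rfl <;> rcases hq with rfl | rfl | rfl | rfl <;>
        first
          | exact absurd rfl hpq
          | exact hxy | exact hxy.symm | exact hxz | exact hxz.symm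
          | exact hyz | exact hyz.symm | exact hvx | exact hvx.symm
          | exact hvy | exact hvy.symm | exact hadj | exact hadj.symm
    have hScard : #S = 4 := by
      rw [hS]
      rw [Finset.card_insert_of_notMem (by
        simp only [Finset.mem_insert, Finset.mem_singleton]
        push_neg
        exact ⟨hxy.ne, hxz.ne, hvx.ne'⟩)]
      rw [Finset.card_insert_of_notMem (by
        simp only [Finset.mem_insert, Finset.mem_singleton]
        push_neg
        exact ⟨hyz.ne, hvy.ne'⟩)]
      rw [Finset.card_insert_of_notMem (by
        simp only [Finset.mem_singleton]
        exact fun h => hvz h.symm)]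
      rw [Finset.card_singleton]
    have hout : ∃ w, w ∉ S ∧ ∃ a ∈ S, ∃ b ∈ S, a ≠ b ∧ G.Adj w a ∧ G.Adj w b := by
      rcases Nat.lt_or_ge n 6 with h5 | h6
      · have hn5 : n = 5 := by omega
        have hne : (Sᶜ : Finset V).Nonempty := by
          rw [← Finset.card_pos, Finset.card_compl, hScard, hcard]
          omega
        obtain ⟨w, hw⟩ := hne
        have hwS : w ∉ S := Finset.mem_compl.mp hw
        have h1 : #(G.neighborFinset w ∩ Sᶜ) ≤ #(Sᶜ : Finset V) - 1 := by
          have hsub : G.neighborFinset w ∩ Sᶜ ⊆ (Sᶜ : Finset V).erase w := by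
            intro u hu
            rw [Finset.mem_erase]
            rw [Finset.mem_inter, mem_neighborFinset] at hu
            exact ⟨hu.1.ne', hu.2⟩
          calc #(G.neighborFinset w ∩ Sᶜ) ≤ #((Sᶜ : Finset V).erase w) :=
                Finset.card_le_card hsub
            _ = #(Sᶜ : Finset V) - 1 := Finset.card_erase_of_mem hw
        have h2 := efgg_split (G := G) w S
        have h3 : #(Sᶜ : Finset V) = n - 4 := by
          rw [Finset.card_compl, hScard, hcard]
        have h4 : 1 < #(G.neighborFinset w ∩ S) := by
          have h5' := hdeg w
          omega
        obtain ⟨a, ha, b, hb, hneab⟩ := Finset.one_lt_card.mp h4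
        rw [Finset.mem_inter, mem_neighborFinset] at ha hb
        exact ⟨w, hwS, a, ha.2, b, hb.2, hneab, ha.1, hb.1⟩
      · apply efgg_exists_two
        have hsum : 4 * (n / 2 + 1) ≤ ∑ u ∈ S, G.degree u := by
          have h0 := Finset.card_nsmul_le_sum S (fun u => G.degree u) (n / 2 + 1) (fun u _ => hdeg u)
          rw [hScard, smul_eq_mul] at h0
          exact h0
        rw [hScard, hcard]
        omega
    obtain ⟨w, hwS, a, haS, b, hbS, hneab, hwa, hwb⟩ := hout
    have habsub : ({a, b} : Finset V) ⊆ S := by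
      intro t ht
      rw [Finset.mem_insert, Finset.mem_singleton] at ht
      rcases ht with rfl | rfl
      · exact haS
      · exact hbS
    have hcd2 : 1 < #(S \ ({a, b} : Finset V)) := by
      rw [Finset.card_sdiff_of_subset habsub, hScard, Finset.card_pair hneab]
      omega
    obtain ⟨c, hc, d, hd, hcdne⟩ := Finset.one_lt_card.mp hcd2
    simp only [Finset.mem_sdiff, Finset.mem_insert, Finset.mem_singleton] at hc hd
    push_neg at hc hd
    have hcS := hc.1
    have hca' := hc.2.1
    have hcb' := hc.2.2
    have hdS := hd.1
    have hda' := hd.2.1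
    have hdb' := hd.2.2
    have hwc : w ≠ c := fun h => hwS (h ▸ hcS)
    have hwd : w ≠ d := fun h => hwS (h ▸ hdS)
    exact hNB (efgg_bowtie (c := a) (a := w) (b := b) (d := c) (e := d)
      hwb hwa.symm (hcomplete a haS b hbS hneab) (hcomplete c hcS d hdS hcdne)
      (hcomplete a haS c hcS hca'.symm) (hcomplete a haS d hdS hda'.symm)
      hwc hwd hcb'.symm hdb'.symm)
  · -- star case
    have hA := efgg_star hNB x y z v hxy hxz hyz hvx hvy hadj hvz
    have hA' := efgg_star hNB y x z v hxy.symm hyz hxz hvy hvx hadj hvz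
    have hB : ∀ u c, G.Adj z u → G.Adj z c → G.Adj u c → u = x ∨ u = y := by
      intro u c hzu hzc huc
      by_cases hux : u = x
      · exact Or.inl hux
      · by_cases huy : u = y
        · exact Or.inr huy
        · by_cases hcx : c = x
          · subst hcx
            rcases hA z u hxz huc.symm hzu with h | h
            · exact absurd h hyz.ne
            · exact absurd h.symm huy
          · by_cases hcy : c = y
            · subst hcy
              rcases hA' z u hyz huc.symm hzu with h | h
              · exact absurd h hxz.ne
              · exact absurd h.symm hux
            · exact (hNB (efgg_bowtie (c := z) (a := u) (b := c) (d := x) (e := y)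
                huc hzu hzc hxy hxz.symm hyz.symm hux huy hcx hcy)).elim
    have h3 : 2 < G.degree z := by
      have := hdeg z
      omega
    have hpos : 0 < #(G.neighborFinset z \ ({x, y} : Finset V)) := by
      have hle := Finset.le_card_sdiff ({x, y} : Finset V) (G.neighborFinset z)
      have hxy2 : #({x, y} : Finset V) ≤ 2 :=
        le_trans (Finset.card_insert_le _ _) (by rw [Finset.card_singleton])
      have hdz : G.degree z = #(G.neighborFinset z) := rfl
      omega
    obtain ⟨u, hu⟩ := Finset.card_pos.mp hpos
    simp only [Finset.mem_sdiff, mem_neighborFinset, Finset.mem_insert, Finset.mem_singleton] at hu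
    push_neg at hu
    have hzu := hu.1
    have hux := hu.2.1
    have huy := hu.2.2
    obtain ⟨c, hzc, huc⟩ := hcommon z u
    rcases hB u c hzu hzc huc with rfl | rfl
    · exact hux rfl
    · exact huy rfl

end EFGGcore
section EFGGub
open Finset SimpleGraph

lemma efgg_UB : ∀ n : ℕ, ∀ (V : Type) [Fintype V] [DecidableEq V] (G : SimpleGraph V),
    Fintype.card V = n → 5 ≤ n → ¬ ContainsCopy (friendship 2) G →
    edgeCount G ≤ n ^ 2 / 4 + 1 := by
  intro n
  induction n using Nat.strong_induction_on with
  | _ n IH =>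
    intro V _ _ G hcard hn hNB
    classical
    haveI : DecidableRel G.Adj := Classical.decRel _
    rw [efgg_count]
    by_contra hcon
    push_neg at hcon
    have hE : n ^ 2 / 4 + 2 ≤ #G.edgeFinset := hcon
    by_cases hdel : ∃ v, G.degree v ≤ n / 2
    · obtain ⟨v, hv⟩ := hdel
      have hsplitE := efgg_edge_split G v
      have hcard' : Fintype.card {w : V // w ≠ v} = n - 1 := by
        have e := Equiv.subtypeEquivRight (p := fun w : V => w ≠ v)
          (q := fun w : V => ¬ w = v) (fun w => Iff.rfl)
        rw [Fintype.card_congr e, Fintype.card_subtype_compl, Fintype.card_subtype_eq, hcard]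
      have hNB' : ¬ ContainsCopy (friendship 2)
          (SimpleGraph.comap (Subtype.val : {w : V // w ≠ v} → V) G) :=
        fun h => hNB (efgg_copy_map Subtype.val Subtype.val_injective
          (fun a b hab => hab) h)
      rcases Nat.lt_or_ge n 6 with h6 | h6
      · have hn5 : n = 5 := by omega
        subst hn5
        have hle : #(SimpleGraph.comap (Subtype.val : {w : V // w ≠ v} → V)
            G).edgeFinset ≤ Nat.choose 4 2 := by
          have h := SimpleGraph.card_edgeFinset_le_card_choose_two
            (G := SimpleGraph.comap (Subtype.val : {w : V // w ≠ v} → V) G)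
          rwa [hcard'] at h
        have hch : Nat.choose 4 2 = 6 := by decide
        have hcomp : ∀ a b : V, a ≠ v → b ≠ v → a ≠ b → G.Adj a b := by
          intro a b ha hb hne
          by_contra hnadj
          have hlt : #(SimpleGraph.comap (Subtype.val : {w : V // w ≠ v} → V)
              G).edgeFinset < #(⊤ : SimpleGraph {w : V // w ≠ v}).edgeFinset := by
            apply Finset.card_lt_card
            refine ⟨SimpleGraph.edgeFinset_mono le_top, ?_⟩
            intro hsub
            have hmem : s((⟨a, ha⟩ : {w : V // w ≠ v}), ⟨b, hb⟩)
                ∈ (⊤ : SimpleGraph {w : V // w ≠ v}).edgeFinset := by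
              rw [mem_edgeFinset, mem_edgeSet, SimpleGraph.top_adj]
              exact fun h => hne (congrArg Subtype.val h)
            have hmem2 := hsub hmem
            rw [mem_edgeFinset, mem_edgeSet] at hmem2
            exact hnadj hmem2
          rw [SimpleGraph.card_edgeFinset_top_eq_card_choose_two, hcard'] at hlt
          have hch2 : (5 - 1).choose 2 = 6 := by decide
          omega
        have hdv : G.degree v = #(G.neighborFinset v) := rfl
        have h1lt : 1 < #(G.neighborFinset v) := by omega
        obtain ⟨a, ha, b, hb, hne⟩ := Finset.one_lt_card.mp h1lt
        rw [mem_neighborFinset] at ha hb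
        have hc3 : #({v, a, b} : Finset V) = 3 := by
          rw [Finset.card_insert_of_notMem (by
            simp only [Finset.mem_insert, Finset.mem_singleton]
            push_neg
            exact ⟨ha.ne, hb.ne⟩), Finset.card_pair hne]
        have hT : 1 < #((univ : Finset V) \ {v, a, b}) := by
          rw [Finset.card_sdiff_of_subset (subset_univ _), Finset.card_univ, hcard, hc3]
          omega
        obtain ⟨c, hcmem, d, hdmem, hcd⟩ := Finset.one_lt_card.mp hT
        simp only [Finset.mem_sdiff, Finset.mem_univ, true_and, Finset.mem_insert,
          Finset.mem_singleton] at hcmem hdmem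
        push_neg at hcmem hdmem
        exact hNB (efgg_bowtie (c := a) (a := v) (b := b) (d := c) (e := d)
          hb ha.symm (hcomp a b ha.ne' hb.ne' hne)
          (hcomp c d hcmem.1 hdmem.1 hcd)
          (hcomp a c ha.ne' hcmem.1 hcmem.2.1.symm)
          (hcomp a d ha.ne' hdmem.1 hdmem.2.1.symm)
          hcmem.1.symm hdmem.1.symm hcmem.2.2.symm hdmem.2.2.symm)
      · have hub := IH (n - 1) (by omega) {w : V // w ≠ v}
          (SimpleGraph.comap (Subtype.val : {w : V // w ≠ v} → V) G) hcard'
          (by omega) hNB'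
        rw [efgg_count] at hub
        obtain ⟨m, rfl⟩ : ∃ m : ℕ, n = m + 1 := ⟨n - 1, by omega⟩
        simp only [Nat.add_sub_cancel] at hub
        have hfloor : m ^ 2 / 4 + (m + 1) / 2 ≤ (m + 1) ^ 2 / 4 := by
          rcases Nat.even_or_odd m with ⟨t, rfl⟩ | ⟨t, rfl⟩
          · have h1 : (t + t) ^ 2 = 4 * t ^ 2 := by ring
            have h2 : (t + t + 1) ^ 2 = 4 * (t ^ 2 + t) + 1 := by ring
            rw [h1, h2]
            set T := t ^ 2
            omega
          · have h1 : (2 * t + 1) ^ 2 = 4 * (t ^ 2 + t) + 1 := by ring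
            have h2 : (2 * t + 1 + 1) ^ 2 = 4 * (t ^ 2 + 2 * t + 1) := by ring
            rw [h1, h2]
            set T := t ^ 2
            omega
        omega
    · push_neg at hdel
      have hdeg : ∀ u, n / 2 + 1 ≤ G.degree u := fun u => hdel u
      have hV : Nonempty V := Fintype.card_pos_iff.mp (by omega)
      obtain ⟨x⟩ := hV
      have hx : 0 < #(G.neighborFinset x) := by
        have h := hdeg x
        have hdd : G.degree x = #(G.neighborFinset x) := rfl
        omega
      obtain ⟨y, hy⟩ := Finset.card_pos.mp hx
      rw [mem_neighborFinset] at hy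
      have hcommon : ∀ p q : V, ∃ c, G.Adj p c ∧ G.Adj q c := by
        intro p q
        have h1 := efgg_codeg (G := G) p q
        have h2 : 0 < #(G.neighborFinset p ∩ G.neighborFinset q) := by
          have hp := hdeg p
          have hq := hdeg q
          rw [hcard] at h1
          omega
        obtain ⟨c, hc⟩ := Finset.card_pos.mp h2
        rw [Finset.mem_inter, mem_neighborFinset, mem_neighborFinset] at hc
        exact ⟨c, hc.1, hc.2⟩
      obtain ⟨z, hxz, hyz⟩ := hcommon x y
      have hScard : #({x, y, z} : Finset V) = 3 := by
        rw [Finset.card_insert_of_notMem (by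
          simp only [Finset.mem_insert, Finset.mem_singleton]
          push_neg
          exact ⟨hy.ne, hxz.ne⟩), Finset.card_pair hyz.ne]
      have hout := efgg_exists_two (G := G) ({x, y, z} : Finset V) (by
        have hsum := Finset.card_nsmul_le_sum ({x, y, z} : Finset V)
          (fun u => G.degree u) (n / 2 + 1) (fun u _ => hdeg u)
        rw [hScard, smul_eq_mul] at hsum
        rw [hScard, hcard]
        omega)
      obtain ⟨w, hwS, a, haS, b, hbS, hneab, hwa, hwb⟩ := hout
      simp only [Finset.mem_insert, Finset.mem_singleton] at haS hbS hwS
      push_neg at hwS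
      rcases haS with h | h | h <;> rcases hbS with h' | h' | h' <;>
        rw [h] at hwa <;> rw [h'] at hwb
      · exact absurd (h.trans h'.symm) hneab
      · exact efgg_core n hn hcard hNB hdeg hcommon x y z w hy hxz hyz hwa hwb hwS.2.2
      · exact efgg_core n hn hcard hNB hdeg hcommon x z y w hxz hy hyz.symm hwa hwb hwS.2.1
      · exact efgg_core n hn hcard hNB hdeg hcommon y x z w hy.symm hyz hxz hwa hwb hwS.2.2
      · exact absurd (h.trans h'.symm) hneab
      · exact efgg_core n hn hcard hNB hdeg hcommon y z x w hyz hy.symm hxz.symm hwa hwb hwS.1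
      · exact efgg_core n hn hcard hNB hdeg hcommon z x y w hxz.symm hyz.symm hy hwa hwb hwS.2.1
      · exact efgg_core n hn hcard hNB hdeg hcommon z y x w hyz.symm hxz.symm hy.symm hwa hwb hwS.1
      · exact absurd (h.trans h'.symm) hneab

end EFGGub
section EFGGconstruction
open Finset SimpleGraph

lemma efgg_bg_adj {n s : ℕ} (i j : Fin n) :
    (biGraphPlus1 n s).Adj i j ↔ (i : ℕ) ≠ (j : ℕ) ∧
      (((i : ℕ) < s ∧ s ≤ (j : ℕ)) ∨ ((j : ℕ) < s ∧ s ≤ (i : ℕ)) ∨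
       ((i : ℕ) = 0 ∧ (j : ℕ) = 1) ∨ ((i : ℕ) = 1 ∧ (j : ℕ) = 0)) := by
  rw [biGraphPlus1, SimpleGraph.fromRel_adj]
  simp only [ne_eq, Fin.ext_iff]
  tauto

lemma efgg_fin_filter {n : ℕ} (p : ℕ → Prop) [DecidablePred p] :
    #(Finset.univ.filter (fun j : Fin n => p (j : ℕ)))
      = #((Finset.range n).filter p) := by
  rw [← Finset.card_attachFin ((Finset.range n).filter p)
    (fun m hm => Finset.mem_range.mp (Finset.mem_filter.mp hm).1)]
  congr 1
  ext j
  simp [Finset.mem_attachFin, Finset.mem_filter, Finset.mem_range, j.isLt]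

lemma efgg_range_card1 {n s : ℕ} (h : s ≤ n) :
    #((Finset.range n).filter (fun m => s ≤ m)) = n - s := by
  have he : (Finset.range n).filter (fun m => s ≤ m) = Finset.Ico s n := by
    ext m
    simp only [Finset.mem_filter, Finset.mem_range, Finset.mem_Ico]
    omega
  rw [he, Nat.card_Ico]

lemma efgg_range_card2 {n s : ℕ} (h : s ≤ n) :
    #((Finset.range n).filter (fun m => m < s)) = s := by
  have he : (Finset.range n).filter (fun m => m < s) = Finset.range s := by
    ext m
    simp only [Finset.mem_filter, Finset.mem_range]
    omega
  rw [he, Finset.card_range]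

lemma efgg_range_card3 {n s c : ℕ} (h2 : 2 ≤ s) (h : s + 2 ≤ n) (hc : c < 2) :
    #((Finset.range n).filter (fun m => s ≤ m ∨ m = c)) = (n - s) + 1 := by
  have he : (Finset.range n).filter (fun m => s ≤ m ∨ m = c)
      = insert c ((Finset.range n).filter (fun m => s ≤ m)) := by
    ext m
    simp only [Finset.mem_insert, Finset.mem_filter, Finset.mem_range]
    omega
  rw [he, Finset.card_insert_of_notMem (by
    simp only [Finset.mem_filter, Finset.mem_range]
    omega), efgg_range_card1 (by omega)]

lemma efgg_bg_deg {n s : ℕ} [DecidableRel (biGraphPlus1 n s).Adj]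
    (hs2 : 2 ≤ s) (hsn : s + 2 ≤ n) (i : Fin n) :
    (biGraphPlus1 n s).degree i
      = (if (i : ℕ) < s then n - s else s) + (if (i : ℕ) < 2 then 1 else 0) := by
  have h0 : (biGraphPlus1 n s).degree i
      = #(Finset.univ.filter (fun j : Fin n => (biGraphPlus1 n s).Adj i j)) := by
    rw [← SimpleGraph.neighborFinset_eq_filter]
    rfl
  have hi := i.isLt
  by_cases h1 : (i : ℕ) < s
  · rw [if_pos h1]
    by_cases h2 : (i : ℕ) < 2
    · rw [if_pos h2]
      by_cases h3 : (i : ℕ) = 0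
      · have he : Finset.univ.filter (fun j : Fin n => (biGraphPlus1 n s).Adj i j)
            = Finset.univ.filter (fun j : Fin n => s ≤ (j : ℕ) ∨ (j : ℕ) = 1) := by
          ext j
          have hj := j.isLt
          simp only [Finset.mem_filter, Finset.mem_univ, true_and, efgg_bg_adj]
          omega
        rw [h0, he, efgg_fin_filter (fun m => s ≤ m ∨ m = 1),
          efgg_range_card3 hs2 hsn (by omega)]
      · have h4 : (i : ℕ) = 1 := by omega
        have he : Finset.univ.filter (fun j : Fin n => (biGraphPlus1 n s).Adj i j)
            = Finset.univ.filter (fun j : Fin n => s ≤ (j : ℕ) ∨ (j : ℕ) = 0) := by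
          ext j
          have hj := j.isLt
          simp only [Finset.mem_filter, Finset.mem_univ, true_and, efgg_bg_adj]
          omega
        rw [h0, he, efgg_fin_filter (fun m => s ≤ m ∨ m = 0),
          efgg_range_card3 hs2 hsn (by omega)]
    · rw [if_neg h2]
      have he : Finset.univ.filter (fun j : Fin n => (biGraphPlus1 n s).Adj i j)
          = Finset.univ.filter (fun j : Fin n => s ≤ (j : ℕ)) := by
        ext j
        have hj := j.isLt
        simp only [Finset.mem_filter, Finset.mem_univ, true_and, efgg_bg_adj]
        omega
      rw [h0, he, efgg_fin_filter (fun m => s ≤ m), efgg_range_card1 (by omega)]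
      omega
  · rw [if_neg h1]
    have h2 : ¬ (i : ℕ) < 2 := by omega
    rw [if_neg h2]
    have he : Finset.univ.filter (fun j : Fin n => (biGraphPlus1 n s).Adj i j)
        = Finset.univ.filter (fun j : Fin n => (j : ℕ) < s) := by
      ext j
      have hj := j.isLt
      simp only [Finset.mem_filter, Finset.mem_univ, true_and, efgg_bg_adj]
      omega
    rw [h0, he, efgg_fin_filter (fun m => m < s), efgg_range_card2 (by omega)]
    omega

lemma efgg_bg_count {n s : ℕ} (hs2 : 2 ≤ s) (hsn : s + 2 ≤ n) :
    edgeCount (biGraphPlus1 n s) = s * (n - s) + 1 := by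
  classical
  rw [efgg_count]
  have hsum := SimpleGraph.sum_degrees_eq_twice_card_edges (biGraphPlus1 n s)
  have hdeg : ∀ i : Fin n, (biGraphPlus1 n s).degree i
      = (if (i : ℕ) < s then n - s else s) + (if (i : ℕ) < 2 then 1 else 0) :=
    fun i => efgg_bg_deg hs2 hsn i
  have hs1 : ∑ i : Fin n, (biGraphPlus1 n s).degree i
      = (∑ i : Fin n, if (i : ℕ) < s then n - s else s)
        + (∑ i : Fin n, if (i : ℕ) < 2 then 1 else 0) := by
    rw [← Finset.sum_add_distrib]
    exact Finset.sum_congr rfl fun i _ => hdeg i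
  have hsA : (∑ i : Fin n, if (i : ℕ) < s then n - s else s)
      = s * (n - s) + (n - s) * s := by
    rw [Finset.sum_ite, Finset.sum_const, Finset.sum_const, smul_eq_mul, smul_eq_mul]
    have hc1 : #(Finset.univ.filter (fun j : Fin n => (j : ℕ) < s)) = s := by
      rw [efgg_fin_filter (fun m => m < s), efgg_range_card2 (by omega)]
    have he : Finset.univ.filter (fun j : Fin n => ¬ (j : ℕ) < s)
        = Finset.univ.filter (fun j : Fin n => s ≤ (j : ℕ)) := by
      ext j
      simp only [Finset.mem_filter, Finset.mem_univ, true_and]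
      omega
    have hc2 : #(Finset.univ.filter (fun j : Fin n => ¬ (j : ℕ) < s)) = n - s := by
      rw [he, efgg_fin_filter (fun m => s ≤ m), efgg_range_card1 (by omega)]
    rw [hc1, hc2]
  have hsB : (∑ i : Fin n, if (i : ℕ) < 2 then 1 else 0) = 2 := by
    rw [← Finset.card_filter, efgg_fin_filter (fun m => m < 2),
      efgg_range_card2 (by omega)]
  rw [hs1, hsA, hsB] at hsum
  have hcomm : (n - s) * s = s * (n - s) := Nat.mul_comm _ _
  omega

lemma efgg_bg_tri {n s : ℕ} {a b c : Fin n} (hab : (biGraphPlus1 n s).Adj a b)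
    (hbc : (biGraphPlus1 n s).Adj b c) (hac : (biGraphPlus1 n s).Adj a c) :
    ((a : ℕ) = 0 ∨ (b : ℕ) = 0 ∨ (c : ℕ) = 0)
      ∧ ((a : ℕ) = 1 ∨ (b : ℕ) = 1 ∨ (c : ℕ) = 1) := by
  rw [efgg_bg_adj] at hab hbc hac
  omega

lemma efgg_bg_free {n s : ℕ} : ¬ ContainsCopy (friendship 2) (biGraphPlus1 n s) := by
  rintro ⟨f, hinj, hadj⟩
  have e01 : (biGraphPlus1 n s).Adj (f 0) (f 1) :=
    hadj 0 1 (by rw [friendship, SimpleGraph.fromRel_adj]; decide)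
  have e02 : (biGraphPlus1 n s).Adj (f 0) (f 2) :=
    hadj 0 2 (by rw [friendship, SimpleGraph.fromRel_adj]; decide)
  have e12 : (biGraphPlus1 n s).Adj (f 1) (f 2) :=
    hadj 1 2 (by rw [friendship, SimpleGraph.fromRel_adj]; decide)
  have e03 : (biGraphPlus1 n s).Adj (f 0) (f 3) :=
    hadj 0 3 (by rw [friendship, SimpleGraph.fromRel_adj]; decide)
  have e04 : (biGraphPlus1 n s).Adj (f 0) (f 4) :=
    hadj 0 4 (by rw [friendship, SimpleGraph.fromRel_adj]; decide)
  have e34 : (biGraphPlus1 n s).Adj (f 3) (f 4) :=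
    hadj 3 4 (by rw [friendship, SimpleGraph.fromRel_adj]; decide)
  have T1 := efgg_bg_tri e01 e12 e02
  have T2 := efgg_bg_tri e03 e34 e04
  have key : ∀ (i j : Fin 5) (t : ℕ), i ≠ j → (f i : ℕ) = t → (f j : ℕ) = t → False := by
    intro i j t hij h1 h2
    exact hij (hinj (Fin.val_injective (h1.trans h2.symm)))
  obtain ⟨A1, B1⟩ := T1
  obtain ⟨A2, B2⟩ := T2
  have h0 : (f 0 : ℕ) = 0 := by
    rcases A1 with h | h | h <;> rcases A2 with h' | h' | h'
    · exact h
    · exact h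
    · exact h
    · exact h'
    · exact (key 1 3 0 (by decide) h h').elim
    · exact (key 1 4 0 (by decide) h h').elim
    · exact h'
    · exact (key 2 3 0 (by decide) h h').elim
    · exact (key 2 4 0 (by decide) h h').elim
  have h1 : (f 0 : ℕ) = 1 := by
    rcases B1 with h | h | h <;> rcases B2 with h' | h' | h'
    · exact h
    · exact h
    · exact h
    · exact h'
    · exact (key 1 3 1 (by decide) h h').elim
    · exact (key 1 4 1 (by decide) h h').elim
    · exact h'
    · exact (key 2 3 1 (by decide) h h').elim
    · exact (key 2 4 1 (by decide) h h').elim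
  omega

end EFGGconstruction



/-- **Erdős–Füredi–Gould–Gunderson.** For `n ≥ 5`,
`ex(n, F₂) = ⌊n²/4⌋ + 1`. -/
theorem stmt_4 (n : ℕ) (hn : 5 ≤ n) :
    IsGreatest {m : ℕ | ∃ G : SimpleGraph (Fin n),
      ¬ ContainsCopy (friendship 2) G ∧ edgeCount G = m} (n ^ 2 / 4 + 1) := by
  constructor
  · refine ⟨biGraphPlus1 n (n / 2), efgg_bg_free, ?_⟩
    have hs2 : 2 ≤ n / 2 := by omega
    have hsn : n / 2 + 2 ≤ n := by omega
    rw [efgg_bg_count hs2 hsn]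
    have hkey : n / 2 * (n - n / 2) = n ^ 2 / 4 := by
      rcases Nat.even_or_odd n with ⟨t, rfl⟩ | ⟨t, rfl⟩
      · have h2 : (t + t) / 2 = t := by omega
        rw [h2]
        have h3 : t + t - t = t := by omega
        rw [h3]
        have h1 : (t + t) ^ 2 = 4 * (t * t) := by ring
        rw [h1]
        set T := t * t
        omega
      · have h2 : (2 * t + 1) / 2 = t := by omega
        rw [h2]
        have h3 : 2 * t + 1 - t = t + 1 := by omega
        rw [h3]
        have h1 : (2 * t + 1) ^ 2 = 4 * (t * t + t) + 1 := by ring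
        rw [h1]
        have h4 : t * (t + 1) = t * t + t := by ring
        rw [h4]
        set T := t * t
        omega
    rw [hkey]
  · rintro m ⟨G, hG, rfl⟩
    exact efgg_UB n (Fin n) G (Fintype.card_fin n) hn hG
end

section
/- (Spectral triangle counting lemma) Let G be a simple graph with m edges, spectral radius λ = λ(G), and t(G) triangles. Then t(G) ≥ λ(λ² − m)/3, and equality holds if and only if G is a complete bipartite graph, possibly together with isolated vertices. -/
/-! `tr A = 0`, `tr A² = 2m` and `tr A³ = 6t` turn the eigenvalues `μᵢ` of the adjacency matrix
into the identity `∑ μᵢ² (μᵢ + λ) = 6t + 2λm`. Since the adjacency matrix is entrywise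
nonnegative, `|μᵢ| ≤ λ`, so every summand is nonnegative and the summand `2λ³` of the top
eigenvalue alone gives `2λ³ ≤ 6t + 2λm`. Equality forces every other eigenvalue to be `0` or
`-λ`, and `tr A = 0` leaves exactly one `-λ`; then `A = λ (x xᵀ - y yᵀ)` for two orthonormal
eigenvectors, and the zero diagonal gives `y = ±x` entrywise, which is a complete bipartite
graph. Conversely, a complete bipartite graph is triangle-free with `λ² = m`. -/

open Finset Matrix

theorem Finset.card_pairwise_ne_triples_of_card_eq_three {α : Type*} [DecidableEq α]
    {s : Finset α} (hs : #s = 3) :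
    Fintype.card {p : s × s × s // p.1 ≠ p.2.1 ∧ p.2.1 ≠ p.2.2 ∧ p.2.2 ≠ p.1} = 6 := by
  let e := s.equivFinOfCardEq hs
  rw [Fintype.card_congr ((e.prodCongr (e.prodCongr e)).subtypeEquiv
    (p := fun p => p.1 ≠ p.2.1 ∧ p.2.1 ≠ p.2.2 ∧ p.2.2 ≠ p.1)
    (q := fun p => p.1 ≠ p.2.1 ∧ p.2.1 ≠ p.2.2 ∧ p.2.2 ≠ p.1) (by simp [e.injective.ne_iff]))]
  rfl

theorem Set.sum_indicator_const {V R : Type*} [Fintype V] [NonAssocSemiring R] (S : Set V)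
    (c : R) :
    ∑ v, S.indicator (fun _ => c) v = S.ncard * c := by
  classical
  simp [Set.indicator_apply, Finset.sum_ite, Set.ncard_eq_toFinset_card']

namespace Matrix

variable {n : Type*} [Fintype n]

theorem IsHermitian.trace_pow [DecidableEq n] {𝕜 : Type*} [RCLike 𝕜] {A : Matrix n n 𝕜}
    (hA : A.IsHermitian) (k : ℕ) : (A ^ k).trace = ∑ i, (hA.eigenvalues i : 𝕜) ^ k := by
  conv_lhs => rw [hA.spectral_theorem, ← map_pow, Unitary.conjStarAlgAut_apply, trace_mul_cycle,
    Unitary.coe_star_mul_self, one_mul, diagonal_pow, trace_diagonal]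
  simp

theorem IsHermitian.apply_eq_sum_eigenvalues [DecidableEq n] {𝕜 : Type*} [RCLike 𝕜]
    {A : Matrix n n 𝕜} (hA : A.IsHermitian) (j l : n) :
    A j l = ∑ i, (hA.eigenvalues i : 𝕜) *
      (hA.eigenvectorUnitary j i * star (hA.eigenvectorUnitary l i)) := by
  conv_lhs => rw [hA.spectral_theorem, Unitary.conjStarAlgAut_apply, mul_apply]
  simp only [mul_diagonal, star_apply, Function.comp_apply]
  exact Finset.sum_congr rfl fun i _ => by ring

theorem IsHermitian.dotProduct_mulVec_le [DecidableEq n] {A : Matrix n n ℝ} (hA : A.IsHermitian)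
    {c : ℝ} (hc : ∀ μ ∈ spectrum ℝ A, μ ≤ c) (x : n → ℝ) : x ⬝ᵥ A *ᵥ x ≤ c * (x ⬝ᵥ x) := by
  have hpos : (algebraMap ℝ (Matrix n n ℝ) c - A).PosSemidef := by
    refine posSemidef_iff_isHermitian_and_spectrum_nonneg.2 ⟨?_, ?_⟩
    · exact (isHermitian_diagonal_of_self_adjoint _ (IsSelfAdjoint.all _)).sub hA
    · rw [← spectrum.singleton_sub_eq]
      rintro _ ⟨_, rfl, μ, hμ, rfl⟩
      simpa using hc μ hμ
  have := hpos.dotProduct_mulVec_nonneg x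
  rwa [Algebra.algebraMap_eq_smul_one, sub_mulVec, smul_mulVec, one_mulVec, dotProduct_sub,
    dotProduct_smul, star_trivial, sub_nonneg, smul_eq_mul] at this

/-- The Perron–Frobenius bound for the bottom of the spectrum: compare `u` with `|u|`. -/
theorem neg_le_of_mulVec_eq_smul {A : Matrix n n ℝ} (hA : ∀ i j, 0 ≤ A i j) {c : ℝ}
    (hc : ∀ x, x ⬝ᵥ A *ᵥ x ≤ c * (x ⬝ᵥ x)) {μ : ℝ} {u : n → ℝ} (hu : u ≠ 0)
    (hAu : A *ᵥ u = μ • u) : -μ ≤ c := by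
  set w : n → ℝ := fun j => |u j|
  have hww : w ⬝ᵥ w = u ⬝ᵥ u := Finset.sum_congr rfl fun j _ => abs_mul_abs_self (u j)
  have hAw : -(u ⬝ᵥ A *ᵥ u) ≤ w ⬝ᵥ A *ᵥ w := by
    simp only [dotProduct, mulVec, ← Finset.sum_neg_distrib, Finset.mul_sum]
    refine Finset.sum_le_sum fun j _ => Finset.sum_le_sum fun l _ => ?_
    calc -(u j * (A j l * u l)) ≤ |u j * (A j l * u l)| := neg_le_abs _
      _ = w j * (A j l * w l) := by simp [w, abs_mul, abs_of_nonneg (hA j l)]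
  have hpos : 0 < u ⬝ᵥ u := by simpa using dotProduct_star_self_pos_iff.2 hu
  rw [hAu, dotProduct_smul, smul_eq_mul] at hAw
  have := (hAw.trans (hc w)).trans_eq (by rw [hww])
  exact le_of_mul_le_mul_right (by linarith) hpos

theorem mem_spectrum_of_mulVec_eq_smul [DecidableEq n] {R : Type*} [CommRing R]
    {A : Matrix n n R} {μ : R} {u : n → R} (hu : u ≠ 0) (hAu : A *ᵥ u = μ • u) :
    μ ∈ spectrum R A := by
  rw [← spectrum_toLin']
  exact (Module.End.hasEigenvalue_of_hasEigenvector
    ⟨Module.End.mem_eigenspace_iff.2 (by simpa using hAu), hu⟩).mem_spectrum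

end Matrix

namespace SimpleGraph

variable {V : Type*} [Fintype V] [DecidableEq V] (G : SimpleGraph V) [DecidableRel G.Adj]

theorem card_adj_triples :
    #{p : V × V × V | G.Adj p.1 p.2.1 ∧ G.Adj p.2.1 p.2.2 ∧ G.Adj p.2.2 p.1} =
      6 * #(G.cliqueFinset 3) := by
  rw [card_eq_sum_card_fiberwise (f := fun p => {p.1, p.2.1, p.2.2}) (t := G.cliqueFinset 3)]
  · rw [mul_comm, ← smul_eq_mul, ← sum_const]
    refine sum_congr rfl fun s hs => ?_
    rw [mem_cliqueFinset_iff] at hs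
    rw [← s.card_pairwise_ne_triples_of_card_eq_three hs.card_eq, Fintype.card_subtype]
    refine card_bij' (fun p hp => (⟨p.1, ?_⟩, ⟨p.2.1, ?_⟩, ⟨p.2.2, ?_⟩))
      (fun q _ => (q.1.1, q.2.1.1, q.2.2.1)) ?_ ?_ (fun _ _ => rfl) (fun _ _ => rfl)
    any_goals simp only [mem_filter] at hp; simp [← hp.2]
    · simp only [mem_filter, mem_univ, true_and, ne_eq, Subtype.mk.injEq]
      exact fun p hp => ⟨hp.1.1.ne, hp.1.2.1.ne, hp.1.2.2.ne⟩
    · rintro ⟨⟨a, ha⟩, ⟨b, hb⟩, ⟨c, hc⟩⟩ hq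
      simp only [mem_filter, mem_univ, true_and, ne_eq, Subtype.mk.injEq] at hq ⊢
      refine ⟨⟨hs.1 ha hb hq.1, hs.1 hb hc hq.2.1, hs.1 hc ha hq.2.2⟩, ?_⟩
      refine eq_of_subset_of_card_le (by simp [insert_subset_iff, ha, hb, hc]) ?_
      rw [hs.card_eq, (card_eq_three.2 ⟨a, b, c, hq.1, Ne.symm hq.2.2, hq.2.1, rfl⟩)]
  · rintro ⟨a, b, c⟩ hp
    simp only [coe_filter, mem_univ, true_and, Set.mem_ofPred_eq] at hp
    simpa [is3Clique_triple_iff] using ⟨hp.1, hp.2.2.symm, hp.2.1⟩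

variable (α : Type*) [Semiring α]

theorem trace_adjMatrix_sq : (G.adjMatrix α ^ 2).trace = 2 * #G.edgeFinset := by
  simp only [sq, trace, diag_apply, adjMatrix_mul_self_apply_self]
  rw [← Nat.cast_sum, sum_degrees_eq_twice_card_edges]
  norm_cast

theorem trace_adjMatrix_pow_three : (G.adjMatrix α ^ 3).trace = 6 * #(G.cliqueFinset 3) := by
  have : (G.adjMatrix α ^ 3).trace = ∑ p : V × V × V,
      if G.Adj p.1 p.2.1 ∧ G.Adj p.2.1 p.2.2 ∧ G.Adj p.2.2 p.1 then 1 else 0 := by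
    simp only [pow_succ, pow_zero, one_mul, trace, diag_apply, mul_apply, adjMatrix_apply,
      Fintype.sum_prod_type, sum_mul]
    rw [sum_congr rfl fun x _ => sum_comm]
    simp only [ite_mul, one_mul, zero_mul, ite_and]
  rw [this, sum_boole, card_adj_triples]
  norm_cast

end SimpleGraph

section AdjacencyMatrix

variable {V : Type*} [Fintype V] (G : SimpleGraph V)

theorem adjMat_eq_adjMatrix [DecidableRel G.Adj] : adjMat G = G.adjMatrix ℝ := by
  ext i j
  simp [adjMat, SimpleGraph.adjMatrix_apply]

theorem adjMat_ne_zero_iff {i j : V} : adjMat G i j ≠ 0 ↔ G.Adj i j := by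
  simp [adjMat]

theorem isHermitian_adjMat : (adjMat G).IsHermitian := by
  ext i j
  simp only [conjTranspose_apply, adjMat, of_apply, star_trivial]
  rw [G.adj_comm]

theorem edgeCount_eq_card_edgeFinset [DecidableRel G.Adj] : edgeCount G = #G.edgeFinset := by
  rw [edgeCount, SimpleGraph.edgeFinset, Set.ncard_eq_toFinset_card']

theorem triangleCount_eq_card_cliqueFinset [DecidableEq V] [DecidableRel G.Adj] :
    triangleCount G = #(G.cliqueFinset 3) := by
  rw [triangleCount, ← Set.ncard_coe_finset, SimpleGraph.coe_cliqueFinset]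
  rfl

end AdjacencyMatrix

section Spectral

variable {V : Type*} [Fintype V] [DecidableEq V] (G : SimpleGraph V)

noncomputable abbrev adjEigenvalues : V → ℝ := (isHermitian_adjMat G).eigenvalues

theorem specRad_eq_sSup_range : specRad G = sSup (Set.range (adjEigenvalues G)) := by
  rw [specRad, (isHermitian_adjMat G).spectrum_real_eq_range_eigenvalues]

theorem le_specRad {μ : ℝ} (hμ : μ ∈ spectrum ℝ (adjMat G)) : μ ≤ specRad G :=
  le_csSup (Matrix.finite_real_spectrum).bddAbove hμ

theorem abs_adjEigenvalues_le_specRad (i : V) : |adjEigenvalues G i| ≤ specRad G := by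
  have hA := isHermitian_adjMat G
  refine abs_le.2 ⟨?_, le_specRad G (hA.eigenvalues_mem_spectrum_real i)⟩
  refine neg_le.1 (Matrix.neg_le_of_mulVec_eq_smul (fun i j => ?_)
    (hA.dotProduct_mulVec_le fun μ => le_specRad G) ?_ (hA.mulVec_eigenvectorBasis i))
  · simp only [adjMat, Matrix.of_apply]; positivity
  · exact (WithLp.ofLp_eq_zero 2).ne.2 (hA.eigenvectorBasis.orthonormal.ne_zero i)

theorem exists_adjEigenvalues_eq_specRad (h : specRad G ≠ 0) :
    ∃ i, adjEigenvalues G i = specRad G := by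
  rw [specRad_eq_sSup_range] at h ⊢
  have hne : (Set.range (adjEigenvalues G)).Nonempty := by
    by_contra hempty
    exact h (by rw [Set.not_nonempty_iff_eq_empty.1 hempty, Real.sSup_empty])
  exact hne.csSup_mem (Set.finite_range _)

theorem specRad_nonneg : 0 ≤ specRad G := by
  by_contra! hneg
  obtain ⟨i, hi⟩ := exists_adjEigenvalues_eq_specRad G hneg.ne
  have := abs_adjEigenvalues_le_specRad G i
  rw [hi, abs_of_neg hneg] at this
  linarith

theorem sum_adjEigenvalues_pow (k : ℕ) :
    ∑ i, adjEigenvalues G i ^ k = (adjMat G ^ k).trace := by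
  simpa using ((isHermitian_adjMat G).trace_pow k).symm

theorem sum_adjEigenvalues : ∑ i, adjEigenvalues G i = 0 := by
  classical
  simpa [adjMat_eq_adjMatrix] using sum_adjEigenvalues_pow G 1

theorem sum_adjEigenvalues_sq : ∑ i, adjEigenvalues G i ^ 2 = 2 * edgeCount G := by
  classical
  rw [sum_adjEigenvalues_pow, adjMat_eq_adjMatrix, G.trace_adjMatrix_sq,
    edgeCount_eq_card_edgeFinset]

theorem sum_adjEigenvalues_pow_three : ∑ i, adjEigenvalues G i ^ 3 = 6 * triangleCount G := by
  classical
  rw [sum_adjEigenvalues_pow, adjMat_eq_adjMatrix, G.trace_adjMatrix_pow_three,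
    triangleCount_eq_card_cliqueFinset]

theorem eq_bot_of_specRad_eq_zero (h : specRad G = 0) : G = ⊥ := by
  have hμ : adjEigenvalues G = 0 :=
    funext fun i => abs_nonpos_iff.1 (h ▸ abs_adjEigenvalues_le_specRad G i)
  have hA := (isHermitian_adjMat G).eigenvalues_eq_zero_iff.1 hμ
  ext u v
  simpa [← adjMat_ne_zero_iff G] using congrFun₂ hA u v

end Spectral

section EigenvalueFamilies

variable {ι : Type*} {μ : ι → ℝ} {i₀ : ι}

theorem sq_mul_add_nonneg (h : ∀ i, |μ i| ≤ μ i₀) (i : ι) : 0 ≤ μ i ^ 2 * (μ i + μ i₀) :=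
  mul_nonneg (sq_nonneg _) (by linarith [neg_abs_le (μ i), h i])

theorem two_mul_pow_three_le_sum_sq_mul_add [Fintype ι] (h : ∀ i, |μ i| ≤ μ i₀) :
    2 * μ i₀ ^ 3 ≤ ∑ i, μ i ^ 2 * (μ i + μ i₀) :=
  calc 2 * μ i₀ ^ 3 = μ i₀ ^ 2 * (μ i₀ + μ i₀) := by ring
    _ ≤ _ := single_le_sum (fun i _ => sq_mul_add_nonneg h i) (mem_univ i₀)

theorem eq_zero_or_eq_neg_of_sum_sq_mul_add_eq [Fintype ι] (h : ∀ i, |μ i| ≤ μ i₀)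
    (heq : ∑ i, μ i ^ 2 * (μ i + μ i₀) = 2 * μ i₀ ^ 3) {i : ι} (hi : i ≠ i₀) :
    μ i = 0 ∨ μ i = -μ i₀ := by
  classical
  have hrest : ∑ j ∈ univ.erase i₀, μ j ^ 2 * (μ j + μ i₀) = 0 := by
    linarith [add_sum_erase univ (fun j => μ j ^ 2 * (μ j + μ i₀)) (mem_univ i₀)]
  have := (sum_eq_zero_iff_of_nonneg fun j _ => sq_mul_add_nonneg h j).1 hrest i
    (mem_erase.2 ⟨hi, mem_univ i⟩)
  rcases mul_eq_zero.1 this with h0 | h0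
  · exact Or.inl (pow_eq_zero_iff two_ne_zero |>.1 h0)
  · exact Or.inr (by linarith)

theorem exists_eq_neg_of_sum_eq_zero [Fintype ι] (hpos : 0 < μ i₀)
    (h : ∀ i ≠ i₀, μ i = 0 ∨ μ i = -μ i₀) (hsum : ∑ i, μ i = 0) :
    ∃ i₁ ≠ i₀, μ i₁ = -μ i₀ ∧ ∀ i, i ≠ i₀ → i ≠ i₁ → μ i = 0 := by
  classical
  have hrest : ∑ i ∈ univ.erase i₀, μ i = -μ i₀ := by
    linarith [add_sum_erase univ μ (mem_univ i₀)]
  obtain ⟨i₁, hi₁, hne⟩ := exists_ne_zero_of_sum_ne_zero (hrest.trans_ne (by linarith))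
  have hi₁₀ := ne_of_mem_erase hi₁
  have hμ₁ := (h i₁ hi₁₀).resolve_left hne
  refine ⟨i₁, hi₁₀, hμ₁, fun i hi₀ hi₁' => ?_⟩
  have hzero : ∑ j ∈ (univ.erase i₀).erase i₁, μ j = 0 := by
    linarith [add_sum_erase _ μ hi₁]
  refine (sum_eq_zero_iff_of_nonpos fun j hj => ?_).1 hzero i
    (mem_erase.2 ⟨hi₁', mem_erase.2 ⟨hi₀, mem_univ i⟩⟩)
  rcases h j (ne_of_mem_erase (mem_of_mem_erase hj)) with h0 | h0 <;> linarith

end EigenvalueFamilies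

section CompleteBipartite

variable {V : Type*}

def IsCompleteBipartiteOn (G : SimpleGraph V) (A B : Set V) : Prop :=
  Disjoint A B ∧ ∀ u v, G.Adj u v ↔ (u ∈ A ∧ v ∈ B) ∨ (u ∈ B ∧ v ∈ A)

theorem isCompleteBipartiteOn_bot : IsCompleteBipartiteOn (⊥ : SimpleGraph V) ∅ ∅ :=
  ⟨disjoint_bot_left, fun u v => by simp⟩

variable {G : SimpleGraph V} {A B : Set V}

theorem IsCompleteBipartiteOn.triangleCount_eq_zero (hG : IsCompleteBipartiteOn G A B) :
    triangleCount G = 0 := by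
  classical
  suffices h : {t : Finset V | G.IsNClique 3 t} = ∅ by rw [triangleCount, h, Set.ncard_empty]
  refine Set.eq_empty_of_forall_notMem fun t ht => ?_
  obtain ⟨a, b, c, hab, hac, hbc, -⟩ := SimpleGraph.is3Clique_iff.1 ht
  have := Set.disjoint_left.1 hG.1
  rw [hG.2] at hab hac hbc
  tauto

theorem IsCompleteBipartiteOn.edgeCount_eq (hG : IsCompleteBipartiteOn G A B) :
    edgeCount G = A.ncard * B.ncard := by
  have hD := Set.disjoint_left.1 hG.1
  have hset : G.edgeSet = (fun p : V × V => s(p.1, p.2)) '' (A ×ˢ B) := by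
    ext ⟨u, v⟩
    simp only [SimpleGraph.mem_edgeSet, hG.2, Set.mem_image, Set.mem_prod, Prod.exists,
      Sym2.eq_iff]
    aesop
  rw [edgeCount, hset, Set.InjOn.ncard_image, Set.ncard_prod]
  rintro ⟨a, b⟩ ⟨ha, hb⟩ ⟨a', b'⟩ ⟨ha', -⟩ hab
  simp only [Sym2.eq_iff] at hab
  rcases hab with ⟨rfl, rfl⟩ | ⟨rfl, rfl⟩
  · rfl
  · exact (hD ha' hb).elim

end CompleteBipartite

section CompleteBipartiteSpectrum

variable {V : Type*} [Fintype V] {G : SimpleGraph V} {A B : Set V}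

theorem IsCompleteBipartiteOn.adjMat_mulVec_indicator (hG : IsCompleteBipartiteOn G A B)
    {s : ℝ} (hs : s ^ 2 = A.ncard * B.ncard) :
    adjMat G *ᵥ (A.indicator (fun _ => (B.ncard : ℝ)) + B.indicator (fun _ => s)) =
      s • (A.indicator (fun _ => (B.ncard : ℝ)) + B.indicator (fun _ => s)) := by
  classical
  have hD := Set.disjoint_left.1 hG.1
  have hterm : ∀ u v,
      adjMat G u v * (A.indicator (fun _ => (B.ncard : ℝ)) v + B.indicator (fun _ => s) v) =
        (if u ∈ A then B.indicator (fun _ => s) v else 0) +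
          (if u ∈ B then A.indicator (fun _ => (B.ncard : ℝ)) v else 0) := by
    intro u v
    by_cases huA : u ∈ A <;> by_cases huB : u ∈ B <;> by_cases hvA : v ∈ A <;>
      by_cases hvB : v ∈ B <;> simp_all [adjMat, hG.2]
  ext u
  simp only [mulVec, dotProduct, Pi.add_apply, hterm, Finset.sum_add_distrib, Pi.smul_apply,
    smul_eq_mul]
  by_cases huA : u ∈ A
  · simp [huA, hD huA, Set.sum_indicator_const]; ring
  · by_cases huB : u ∈ B
    · simp [huA, huB, Set.sum_indicator_const, ← hs]; ring
    · simp [huA, huB]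

theorem IsCompleteBipartiteOn.edgeCount_le_specRad_sq [DecidableEq V]
    (hG : IsCompleteBipartiteOn G A B) : (edgeCount G : ℝ) ≤ specRad G ^ 2 := by
  rw [hG.edgeCount_eq]
  push_cast
  rcases A.eq_empty_or_nonempty with rfl | hA
  · simpa using sq_nonneg (specRad G)
  rcases B.eq_empty_or_nonempty with rfl | ⟨b, hb⟩
  · simpa using sq_nonneg (specRad G)
  obtain ⟨a, ha⟩ := hA
  have hs : √(A.ncard * B.ncard : ℝ) ^ 2 = A.ncard * B.ncard := Real.sq_sqrt (by positivity)
  have hx : A.indicator (fun _ => (B.ncard : ℝ)) + B.indicator (fun _ => √(A.ncard * B.ncard : ℝ))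
      ≠ 0 := by
    have hB : (0 : ℝ) < B.ncard := by exact_mod_cast (Set.ncard_pos B.toFinite).2 ⟨b, hb⟩
    intro h0
    have := congrFun h0 a
    simp only [Pi.add_apply, Set.indicator_of_mem ha,
      Set.indicator_of_notMem (Set.disjoint_left.1 hG.1 ha), add_zero, Pi.zero_apply] at this
    exact hB.ne' this
  have := le_specRad G (mem_spectrum_of_mulVec_eq_smul hx (hG.adjMat_mulVec_indicator hs))
  calc _ = √(A.ncard * B.ncard : ℝ) ^ 2 := hs.symm
    _ ≤ specRad G ^ 2 := pow_le_pow_left₀ (Real.sqrt_nonneg _) this 2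


theorem isCompleteBipartiteOn_of_adjMat_eq {c : ℝ} (hc : c ≠ 0) {x y : V → ℝ}
    (h : ∀ j l, adjMat G j l = c * (x j * x l - y j * y l)) :
    IsCompleteBipartiteOn G {j | x j ≠ 0 ∧ y j = -x j} {j | x j ≠ 0 ∧ y j = x j} := by
  have hy : ∀ j, y j = x j ∨ y j = -x j := fun j => by
    have hjj : c * (x j * x j - y j * y j) = 0 := by rw [← h]; simp [adjMat]
    exact mul_self_eq_mul_self_iff.1 (by linarith [(mul_eq_zero.1 hjj).resolve_left hc])
  refine ⟨Set.disjoint_left.2 fun j hA hB => hA.1 (by linarith [hA.2, hB.2]), fun u v => ?_⟩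
  rw [← adjMat_ne_zero_iff, h, mul_ne_zero_iff, Set.mem_ofPred_eq, Set.mem_ofPred_eq,
    Set.mem_ofPred_eq, Set.mem_ofPred_eq]
  rcases hy u with hu | hu <;> rcases hy v with hv | hv <;> rw [hu, hv] <;>
    ring_nf <;> simp [hc, CharZero.eq_neg_self_iff, CharZero.neg_eq_self_iff]

end CompleteBipartiteSpectrum

section Main

variable {V : Type*} [Fintype V] [DecidableEq V] (G : SimpleGraph V)

theorem sum_sq_mul_add_specRad :
    ∑ i, adjEigenvalues G i ^ 2 * (adjEigenvalues G i + specRad G) =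
      6 * triangleCount G + 2 * specRad G * edgeCount G := by
  simp only [mul_add, Finset.sum_add_distrib, ← pow_succ, ← Finset.sum_mul,
    sum_adjEigenvalues_pow_three, sum_adjEigenvalues_sq]
  ring

theorem specRad_mul_sub_le_triangleCount :
    specRad G * (specRad G ^ 2 - edgeCount G) / 3 ≤ triangleCount G := by
  by_cases h0 : specRad G = 0
  · simp [h0]
  obtain ⟨i₀, hi₀⟩ := exists_adjEigenvalues_eq_specRad G h0
  have := two_mul_pow_three_le_sum_sq_mul_add (hi₀ ▸ abs_adjEigenvalues_le_specRad G)
  rw [hi₀, sum_sq_mul_add_specRad] at this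
  linarith

theorem specRad_sq_le_edgeCount_of_triangleCount_eq_zero (h : triangleCount G = 0) :
    specRad G ^ 2 ≤ edgeCount G := by
  have h1 := specRad_mul_sub_le_triangleCount G
  rw [h] at h1
  rcases (specRad_nonneg G).eq_or_lt with h0 | h0
  · rw [← h0]
    simp
  · nlinarith

theorem exists_isCompleteBipartiteOn_of_triangleCount_eq
    (h : (triangleCount G : ℝ) = specRad G * (specRad G ^ 2 - edgeCount G) / 3) :
    ∃ A B, IsCompleteBipartiteOn G A B := by
  by_cases h0 : specRad G = 0
  · exact ⟨∅, ∅, eq_bot_of_specRad_eq_zero G h0 ▸ isCompleteBipartiteOn_bot⟩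
  obtain ⟨i₀, hi₀⟩ := exists_adjEigenvalues_eq_specRad G h0
  set μ := adjEigenvalues G
  have habs : ∀ i, |μ i| ≤ μ i₀ := hi₀ ▸ abs_adjEigenvalues_le_specRad G
  have heq : ∑ i, μ i ^ 2 * (μ i + μ i₀) = 2 * μ i₀ ^ 3 := by
    rw [hi₀, sum_sq_mul_add_specRad]; linarith
  obtain ⟨i₁, hi₁₀, hμ₁, hzero⟩ := exists_eq_neg_of_sum_eq_zero (μ := μ) (i₀ := i₀)
    (lt_of_le_of_ne (hi₀ ▸ specRad_nonneg G) (hi₀ ▸ Ne.symm h0))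
    (fun i hi => eq_zero_or_eq_neg_of_sum_sq_mul_add_eq habs heq hi) (sum_adjEigenvalues G)
  -- spectral decomposition: `A = λ (x xᵀ - y yᵀ)` for the eigenvectors `x, y` of `λ, -λ`
  let U := (isHermitian_adjMat G).eigenvectorUnitary
  refine ⟨_, _, isCompleteBipartiteOn_of_adjMat_eq h0 (x := fun j => U j i₀)
    (y := fun j => U j i₁) fun j l => ?_⟩
  rw [(isHermitian_adjMat G).apply_eq_sum_eigenvalues]
  change ∑ i, μ i * (U j i * star (U l i)) = _
  rw [Fintype.sum_eq_add i₀ i₁ hi₁₀.symm (fun i hi => by rw [hzero i hi.1 hi.2, zero_mul]),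
    hμ₁, hi₀]
  simp only [star_trivial]
  ring

theorem triangleCount_eq_iff :
    (triangleCount G : ℝ) = specRad G * (specRad G ^ 2 - edgeCount G) / 3 ↔
      ∃ A B, IsCompleteBipartiteOn G A B := by
  refine ⟨exists_isCompleteBipartiteOn_of_triangleCount_eq G, fun ⟨A, B, hG⟩ => ?_⟩
  have ht := hG.triangleCount_eq_zero
  have hm := le_antisymm (specRad_sq_le_edgeCount_of_triangleCount_eq_zero G ht)
    hG.edgeCount_le_specRad_sq
  rw [ht, hm]
  simp

end Main

/-- **spectral triangle counting lemma.** For any graph `G` with `m` edges,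
`t(G) ≥ λ(λ² − m)/3`, with equality iff `G` is a complete bipartite graph possibly together
with isolated vertices. -/
theorem stmt_8 (n : ℕ) (G : SimpleGraph (Fin n)) :
    specRad G * (specRad G ^ 2 - (edgeCount G : ℝ)) / 3 ≤ (triangleCount G : ℝ) ∧
    ((triangleCount G : ℝ) = specRad G * (specRad G ^ 2 - (edgeCount G : ℝ)) / 3 ↔
      ∃ A B : Set (Fin n), Disjoint A B ∧
        ∀ u v, G.Adj u v ↔ ((u ∈ A ∧ v ∈ B) ∨ (u ∈ B ∧ v ∈ A))) :=
  ⟨specRad_mul_sub_le_triangleCount G, triangleCount_eq_iff G⟩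
end

section
/- Let ε > 0 and let G be a simple graph on n vertices with at least n²/4 + εn² edges. Then G contains more than (ε/3)·n³ triangles. -/
/-!
Counting ordered pairs of adjacent vertices `(x, y)` together with a common neighbour gives
`6 t = ∑_{x ~ y} |N(x) ∩ N(y)|`, and inclusion–exclusion gives `|N(x) ∩ N(y)| ≥ d(x) + d(y) - n`.
Since `∑_{x ~ y} (d(x) + d(y)) = 2 ∑ d(v)²`, this yields `∑ d(v)² ≤ n e + 3 t`, and Cauchy–Schwarz
`(2e)² ≤ n ∑ d(v)²` turns it into `3 n t ≥ e (4e - n²)`. With `e ≥ n²/4 + εn²` the right-hand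
side exceeds `(n²/4) · 4εn² = εn⁴`.
-/

namespace SimpleGraph

open Finset

variable {V : Type*} [Fintype V] (G : SimpleGraph V) [DecidableRel G.Adj]

lemma edgeCount_eq_card_edgeFinset : edgeCount G = #G.edgeFinset := by
  rw [edgeCount, ← coe_edgeFinset, Set.ncard_coe_finset]

lemma sum_sum_neighborFinset_comm {M : Type*} [AddCommMonoid M] (f : V → V → M) :
    ∑ x, ∑ y ∈ G.neighborFinset x, f x y = ∑ x, ∑ y ∈ G.neighborFinset x, f y x :=
  sum_comm' fun x y => by simp [adj_comm]

lemma sum_sum_neighborFinset_degree_add :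
    ∑ x, ∑ y ∈ G.neighborFinset x, (G.degree x + G.degree y) = 2 * ∑ v, G.degree v ^ 2 := by
  rw [sum_congr rfl fun x _ => sum_add_distrib, sum_add_distrib,
    ← sum_sum_neighborFinset_comm G fun x _ => G.degree x]
  simp [sq, two_mul]

variable [DecidableEq V]

lemma triangleCount_eq_card_cliqueFinset : triangleCount G = #(G.cliqueFinset 3) := by
  rw [triangleCount, ← Set.ncard_coe_finset, coe_cliqueFinset]
  rfl

lemma degree_add_degree_le_card_add_card_inter (x y : V) :
    G.degree x + G.degree y ≤ Fintype.card V + #(G.neighborFinset x ∩ G.neighborFinset y) := by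
  rw [← card_neighborFinset_eq_degree, ← card_neighborFinset_eq_degree,
    ← card_union_add_card_inter]
  exact Nat.add_le_add_right (card_le_univ _) _

lemma Adj.card_inter_neighborFinset_eq_card_filter_cliqueFinset {x y : V} (h : G.Adj x y) :
    #(G.neighborFinset x ∩ G.neighborFinset y) = #{t ∈ G.cliqueFinset 3 | x ∈ t ∧ y ∈ t} := by
  refine card_bij (fun z _ => {x, y, z}) ?_ ?_ ?_
  · intro z hz
    simp only [mem_inter, mem_neighborFinset] at hz
    simp [is3Clique_triple_iff, h, hz]
  · intro z hz z' _ hzz'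
    have hz' : z ∈ ({x, y, z'} : Finset V) := hzz' ▸ by simp
    simp only [mem_inter, mem_neighborFinset] at hz
    simp only [mem_insert, mem_singleton] at hz'
    rcases hz' with rfl | rfl | rfl
    · exact absurd hz.1 G.irrefl
    · exact absurd hz.2 G.irrefl
    · rfl
  · intro t ht
    simp only [mem_filter, mem_cliqueFinset_iff] at ht
    obtain ⟨ht3, hx, hy⟩ := ht
    have hy' : y ∈ t.erase x := mem_erase.2 ⟨h.ne.symm, hy⟩
    obtain ⟨z, hz⟩ := card_eq_one.1 <| by
      rw [card_erase_of_mem hy', card_erase_of_mem hx, ht3.card_eq]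
    have ht : t = {x, y, z} := by rw [← hz, insert_erase hy', insert_erase hx]
    rw [ht, is3Clique_triple_iff] at ht3
    exact ⟨z, by simp [ht3.2.1, ht3.2.2], ht.symm⟩

variable {G} in
lemma IsClique.neighborFinset_inter_eq_erase {t : Finset V} (ht : G.IsClique (t : Set V)) {x : V}
    (hx : x ∈ t) : G.neighborFinset x ∩ t = t.erase x := by
  ext y
  simp only [mem_inter, mem_neighborFinset, mem_erase]
  exact ⟨fun h => ⟨h.1.ne.symm, h.2⟩, fun h => ⟨ht hx h.2 h.1.symm, h.2⟩⟩

lemma sum_sum_card_filter_cliqueFinset :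
    ∑ x, ∑ y ∈ G.neighborFinset x, #{t ∈ G.cliqueFinset 3 | x ∈ t ∧ y ∈ t}
      = 6 * #(G.cliqueFinset 3) := by
  calc _ = ∑ t ∈ G.cliqueFinset 3, ∑ x ∈ t, #(G.neighborFinset x ∩ t) := by
        simp only [card_filter]
        rw [sum_congr rfl fun x _ => sum_comm, sum_comm]
        refine sum_congr rfl fun t _ => ?_
        rw [← univ_inter t, ← sum_ite_mem]
        refine sum_congr rfl fun x _ => ?_
        by_cases hx : x ∈ t <;> simp [hx]
    _ = ∑ t ∈ G.cliqueFinset 3, 6 := by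
        refine sum_congr rfl fun t ht => ?_
        rw [mem_cliqueFinset_iff] at ht
        rw [sum_congr rfl fun x hx => by rw [ht.isClique.neighborFinset_inter_eq_erase hx,
          card_erase_of_mem hx, ht.card_eq], sum_const, ht.card_eq, smul_eq_mul]
    _ = _ := by rw [sum_const, smul_eq_mul, mul_comm]

lemma sum_sum_card_inter_neighborFinset :
    ∑ x, ∑ y ∈ G.neighborFinset x, #(G.neighborFinset x ∩ G.neighborFinset y)
      = 6 * #(G.cliqueFinset 3) := by
  rw [← sum_sum_card_filter_cliqueFinset]
  exact sum_congr rfl fun x _ => sum_congr rfl fun y hy =>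
    ((G.mem_neighborFinset x y).1 hy).card_inter_neighborFinset_eq_card_filter_cliqueFinset

lemma sum_degree_sq_le :
    ∑ v, G.degree v ^ 2 ≤ Fintype.card V * #G.edgeFinset + 3 * #(G.cliqueFinset 3) := by
  have key : 2 * ∑ v, G.degree v ^ 2 ≤
      Fintype.card V * ∑ v, G.degree v + 6 * #(G.cliqueFinset 3) :=
    calc 2 * ∑ v, G.degree v ^ 2
        = ∑ x, ∑ y ∈ G.neighborFinset x, (G.degree x + G.degree y) :=
          (sum_sum_neighborFinset_degree_add G).symm
      _ ≤ ∑ x, ∑ y ∈ G.neighborFinset x,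
            (Fintype.card V + #(G.neighborFinset x ∩ G.neighborFinset y)) :=
          sum_le_sum fun x _ => sum_le_sum fun y _ =>
            G.degree_add_degree_le_card_add_card_inter x y
      _ = _ := by
          simp only [sum_add_distrib, sum_const, smul_eq_mul, card_neighborFinset_eq_degree,
            sum_sum_card_inter_neighborFinset, mul_comm]
          rw [mul_sum]
  rw [sum_degrees_eq_twice_card_edges, mul_left_comm] at key
  omega

/-- The Nordhaus–Stewart bound `t ≥ e (4e - n²) / (3n)`. -/
theorem four_mul_card_edgeFinset_sq_le :
    4 * #G.edgeFinset ^ 2 ≤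
      Fintype.card V ^ 2 * #G.edgeFinset + 3 * Fintype.card V * #(G.cliqueFinset 3) := by
  have hcs := sq_sum_le_card_mul_sum_sq (s := univ) (f := fun v => G.degree v)
  rw [sum_degrees_eq_twice_card_edges, card_univ] at hcs
  have := Nat.mul_le_mul_left (Fintype.card V) G.sum_degree_sq_le
  nlinarith

end SimpleGraph

/-- If `ε > 0` and a graph on `n` vertices has at least `n²/4 + εn²` edges,
then it contains more than `(ε/3)·n³` triangles. -/
theorem stmt_10 (n : ℕ) (hn : 1 ≤ n) (ε : ℝ) (hε : 0 < ε) (G : SimpleGraph (Fin n))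
    (he : (n : ℝ) ^ 2 / 4 + ε * (n : ℝ) ^ 2 ≤ (edgeCount G : ℝ)) :
    ε / 3 * (n : ℝ) ^ 3 < (triangleCount G : ℝ) := by
  classical
  have hcount := G.four_mul_card_edgeFinset_sq_le
  rw [Fintype.card_fin] at hcount
  rw [G.edgeCount_eq_card_edgeFinset] at he
  rw [G.triangleCount_eq_card_cliqueFinset]
  set e := G.edgeFinset.card
  set t := (G.cliqueFinset 3).card
  have hgoodman : 4 * (e : ℝ) ^ 2 ≤ n ^ 2 * e + 3 * n * t := by exact_mod_cast hcount
  have hn : (0 : ℝ) < n := by exact_mod_cast hn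
  have hexcess : 4 * ε * n ^ 2 ≤ 4 * e - n ^ 2 := by linarith
  have : ε * n ^ 4 < (e : ℝ) * (4 * e - n ^ 2) :=
    calc ε * (n : ℝ) ^ 4 < (n ^ 2 / 4 + ε * n ^ 2) * (4 * ε * n ^ 2) := by
          nlinarith [mul_pos (mul_pos hε hε) (pow_pos hn 4)]
      _ ≤ (e : ℝ) * (4 * e - n ^ 2) := by gcongr
  nlinarith
end
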